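/- arXiv:1908.01197 — 3 statements merged into one kernel-verified Lean document; each statement's English description precedes it below -/
import Mathlib

section
/- For a finite undirected graph with symmetric positive conductivities C_ij = C_ji and lengths L_ij = L_ji on its edges, if the pressures P_i satisfy the Kirchhoff law −Σ_{j∈N(i)} C_ij (P_j − P_i)/L_ij = S_i at every vertex i, and the fluxes are Q_ij = C_ij (P_j − P_i)/L_ij, then for any admissible differentiable family of pressures P(C) solving the Kirchhoff law (with the sources S fixed), one has Σ_{(i,j)∈E} (Q_ij/C_ij)(∂Q_ij/∂C_kl) L_ij = 0 for each fixed edge (k,l). -/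
open Finset Filter

/-- For a finite undirected graph with symmetric positive conductivities `C` and lengths `L`,
if along a differentiable one-parameter family of conductivities (varying only the value
`s = C_kl` of a fixed edge `(k,l)`) the pressures `P(s)` solve the Kirchhoff law with fixed
sources `S`, then `∑_{(i,j)∈E} (Q_ij / C_ij) (∂Q_ij/∂C_kl) L_ij = 0`.
(The sum over unordered edges is written as one half of the sum over ordered adjacent pairs.) -/
theorem discrete_flux_derivative_orthogonality
    {V : Type*} [Fintype V] [DecidableEq V]
    (A : V → V → Prop) [DecidableRel A]
    (hAsymm : ∀ i j, A i j → A j i) (hAirrefl : ∀ i, ¬ A i i)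
    (L : V → V → ℝ) (hLsymm : ∀ i j, L i j = L j i) (hLpos : ∀ i j, A i j → 0 < L i j)
    (S : V → ℝ) (hSbal : ∑ i, S i = 0)
    (k l : V) (hkl : A k l)
    (C : ℝ → V → V → ℝ) (P : ℝ → V → ℝ) (s₀ : ℝ)
    (hCsymm : ∀ s i j, C s i j = C s j i)
    (hCkl : ∀ s, C s k l = s)
    (hCoff : ∀ s i j, ¬ ((i = k ∧ j = l) ∨ (i = l ∧ j = k)) → C s i j = C s₀ i j)
    (hCpos : ∀ i j, A i j → 0 < C s₀ i j)
    (hPdiff : ∀ i, DifferentiableAt ℝ (fun s => P s i) s₀)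
    (hKirchhoff : ∀ᶠ s in nhds s₀, ∀ i,
      -∑ j ∈ univ.filter (fun j => A i j), C s i j * (P s j - P s i) / L i j = S i)
    (Q : ℝ → V → V → ℝ)
    (hQ : ∀ s i j, Q s i j = C s i j * (P s j - P s i) / L i j) :
    (1 / 2) * ∑ i, ∑ j ∈ univ.filter (fun j => A i j),
        Q s₀ i j / C s₀ i j * deriv (fun s => Q s i j) s₀ * L i j = 0 := by
  set D : V → V → ℝ := fun i j => deriv (fun s => Q s i j) s₀ with hDdef
  -- differentiability of C in s
  have hCdiff : ∀ i j, DifferentiableAt ℝ (fun s => C s i j) s₀ := by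
    intro i j
    by_cases h : (i = k ∧ j = l) ∨ (i = l ∧ j = k)
    · rcases h with ⟨hi, hj⟩ | ⟨hi, hj⟩
      · have he : (fun s => C s i j) = fun s => s := by
          funext s; rw [hi, hj]; exact hCkl s
        rw [he]; exact differentiableAt_id
      · have he : (fun s => C s i j) = fun s => s := by
          funext s; rw [hi, hj, hCsymm]; exact hCkl s
        rw [he]; exact differentiableAt_id
    · have he : (fun s => C s i j) = fun _ => C s₀ i j :=
        funext (fun s => hCoff s i j h)
      rw [he]; exact differentiableAt_const _
  have hQdiff : ∀ i j, DifferentiableAt ℝ (fun s => Q s i j) s₀ := by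
    intro i j
    have he : (fun s => Q s i j) = fun s => C s i j * (P s j - P s i) / L i j :=
      funext (fun s => hQ s i j)
    rw [he]
    exact ((hCdiff i j).mul ((hPdiff j).sub (hPdiff i))).div_const _
  -- row sums of derivatives vanish (Kirchhoff)
  have hsum : ∀ i, (fun s => ∑ j ∈ univ.filter (fun j => A i j), Q s i j)
      =ᶠ[nhds s₀] fun _ => -S i := by
    intro i
    filter_upwards [hKirchhoff] with s hs
    have h1 := hs i
    simp only [hQ]
    linarith
  have hderivsum : ∀ i, ∑ j ∈ univ.filter (fun j => A i j), D i j = 0 := by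
    intro i
    have h1 := Filter.EventuallyEq.deriv_eq (hsum i)
    rw [deriv_const] at h1
    rw [hDdef, ← deriv_fun_sum (fun j _ => hQdiff i j), h1]
  -- antisymmetry of D
  have hDanti : ∀ i j, D i j = -D j i := by
    intro i j
    have he : (fun s => Q s i j) = fun s => -(Q s j i) := by
      funext s
      rw [hQ, hQ, hCsymm s i j, hLsymm i j]
      ring
    simp only [hDdef, he, deriv.fun_neg]
  -- rewrite summand
  have step1 : ∀ i, ∀ j ∈ univ.filter (fun j => A i j),
      Q s₀ i j / C s₀ i j * D i j * L i j = (P s₀ j - P s₀ i) * D i j := by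
    intro i j hj
    rw [mem_filter] at hj
    have hA := hj.2
    rw [hQ]
    field_simp [(hCpos i j hA).ne', (hLpos i j hA).ne']
  rw [Finset.sum_congr rfl (fun i _ => Finset.sum_congr rfl (step1 i))]
  rw [mul_eq_zero]; right
  -- expand (P j - P i) * D i j and kill the P i part via hderivsum
  have expand : ∀ i, ∑ j ∈ univ.filter (fun j => A i j), (P s₀ j - P s₀ i) * D i j
      = ∑ j ∈ univ.filter (fun j => A i j), P s₀ j * D i j := by
    intro i
    have : ∑ j ∈ univ.filter (fun j => A i j), (P s₀ j - P s₀ i) * D i j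
        = (∑ j ∈ univ.filter (fun j => A i j), P s₀ j * D i j)
          - P s₀ i * ∑ j ∈ univ.filter (fun j => A i j), D i j := by
      rw [Finset.mul_sum, ← Finset.sum_sub_distrib]
      exact Finset.sum_congr rfl (fun j _ => by ring)
    rw [this, hderivsum i, mul_zero, sub_zero]
  rw [Finset.sum_congr rfl (fun i _ => expand i)]
  -- switch to ite form and swap the double sum
  have hfil : ∀ i, ∑ j ∈ univ.filter (fun j => A i j), P s₀ j * D i j
      = ∑ j, if A i j then P s₀ j * D i j else 0 := by
    intro i; rw [Finset.sum_filter]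
  rw [Finset.sum_congr rfl (fun i _ => hfil i), Finset.sum_comm]
  have inner : ∀ j, ∑ i, (if A i j then P s₀ j * D i j else 0) = 0 := by
    intro j
    have h1 : ∀ i, (if A i j then P s₀ j * D i j else 0)
        = -(if A j i then P s₀ j * D j i else 0) := by
      intro i
      by_cases h : A i j
      · rw [if_pos h, if_pos (hAsymm i j h), hDanti i j]; ring
      · rw [if_neg h, if_neg (fun h' => h (hAsymm j i h')), neg_zero]
    rw [Finset.sum_congr rfl (fun i _ => h1 i), Finset.sum_neg_distrib]
    have h2 : ∑ i, (if A j i then P s₀ j * D j i else 0)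
        = P s₀ j * ∑ i ∈ univ.filter (fun i => A j i), D j i := by
      rw [Finset.mul_sum, Finset.sum_filter]
    rw [h2, hderivsum j, mul_zero, neg_zero]
  rw [Finset.sum_congr rfl (fun j _ => inner j), Finset.sum_const_zero]
end

section
/- Under the hypotheses of the previous lemma, the derivative of the pumping energy with respect to the conductivity of a fixed edge (k,l) satisfies ∂/∂C_kl [ Σ_{(i,j)∈E} Q_ij(C)²/C_ij · L_ij ] = − Q_kl(C)²/C_kl² · L_kl. -/
open Finset Filter

lemma sym_sum_eq {V : Type*} [Fintype V] [DecidableEq V]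
    (A : V → V → Prop) [DecidableRel A] (hAsymm : ∀ i j, A i j → A j i)
    (w : V → V → ℝ) (hw : ∀ i j, A i j → w i j = w j i) (a b : V → ℝ) :
    ∑ i, ∑ j ∈ univ.filter (fun j => A i j), w i j * (a j - a i) * (b j - b i)
      = -2 * ∑ i, a i * ∑ j ∈ univ.filter (fun j => A i j), w i j * (b j - b i) := by
  have swap :
      ∑ i, ∑ j ∈ univ.filter (fun j => A i j), w i j * a j * (b j - b i)
        = ∑ i, ∑ j ∈ univ.filter (fun j => A i j), w i j * a i * (b i - b j) := by
    rw [Finset.sum_comm' (t' := univ) (s' := fun y => univ.filter (fun x => A x y))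
      (by intro x y; simp only [mem_univ, true_and, and_true, mem_filter])]
    refine Finset.sum_congr rfl fun i _ => ?_
    refine Finset.sum_congr ?_ fun j hj => ?_
    · apply Finset.filter_congr; intro j _
      exact ⟨fun h => hAsymm _ _ h, fun h => hAsymm _ _ h⟩
    · have hAij : A i j := (mem_filter.mp hj).2
      rw [hw _ _ hAij]
  have expand :
      ∑ i, ∑ j ∈ univ.filter (fun j => A i j), w i j * (a j - a i) * (b j - b i)
        = (∑ i, ∑ j ∈ univ.filter (fun j => A i j), w i j * a j * (b j - b i))
          - ∑ i, ∑ j ∈ univ.filter (fun j => A i j), w i j * a i * (b j - b i) := by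
    rw [← Finset.sum_sub_distrib]
    refine Finset.sum_congr rfl fun i _ => ?_
    rw [← Finset.sum_sub_distrib]
    exact Finset.sum_congr rfl fun j _ => by ring
  rw [expand, swap]
  rw [← Finset.sum_sub_distrib]
  rw [show (-2 : ℝ) * ∑ i, a i * ∑ j ∈ univ.filter (fun j => A i j), w i j * (b j - b i)
      = ∑ i, ∑ j ∈ univ.filter (fun j => A i j), (-2) * (a i * (w i j * (b j - b i))) by
    simp only [Finset.mul_sum]]
  refine Finset.sum_congr rfl fun i _ => ?_
  rw [← Finset.sum_sub_distrib]
  exact Finset.sum_congr rfl fun j _ => by ring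

lemma sum_edge_pair {V : Type*} [Fintype V] [DecidableEq V]
    (A : V → V → Prop) [DecidableRel A] (k l : V) (hkl : A k l) (hlk : A l k)
    (hne : k ≠ l) (f : V → V → ℝ) :
    ∑ i, ∑ j ∈ univ.filter (fun j => A i j),
        (if (i = k ∧ j = l) ∨ (i = l ∧ j = k) then f i j else 0) = f k l + f l k := by
  rw [← Finset.sum_subset (Finset.subset_univ ({k, l} : Finset V))
      (by
        intro i _ hi
        apply Finset.sum_eq_zero
        intro j _
        rw [if_neg]
        simp only [Finset.mem_insert, Finset.mem_singleton, not_or] at hi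
        rintro (⟨rfl, rfl⟩ | ⟨rfl, rfl⟩) <;> simp at hi)]
  rw [Finset.sum_pair hne]
  congr 1
  · rw [Finset.sum_eq_single_of_mem l (Finset.mem_filter.mpr ⟨Finset.mem_univ l, hkl⟩)]
    · rw [if_pos (Or.inl ⟨rfl, rfl⟩)]
    · intro j _ hjl
      rw [if_neg]
      rintro (⟨_, rfl⟩ | ⟨rfl, _⟩) <;> [exact hjl rfl; exact hne rfl]
  · rw [Finset.sum_eq_single_of_mem k (Finset.mem_filter.mpr ⟨Finset.mem_univ k, hlk⟩)]
    · rw [if_pos (Or.inr ⟨rfl, rfl⟩)]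
    · intro j _ hjk
      rw [if_neg]
      rintro (⟨rfl, _⟩ | ⟨_, rfl⟩) <;> [exact hne rfl; exact hjk rfl]

/-- Derivative of the pumping energy with respect to the conductivity of a fixed edge `(k,l)`:
`∂/∂C_kl [ ∑_{(i,j)∈E} Q_ij(C)²/C_ij · L_ij ] = − Q_kl(C)²/C_kl² · L_kl`,
where the pressures `P(s)` solve the Kirchhoff law with fixed sources along the family of
conductivities varying only the value `s = C_kl`. (The sum over unordered edges is written
as one half of the sum over ordered adjacent pairs.) -/
theorem discrete_pumping_energy_derivative
    {V : Type*} [Fintype V] [DecidableEq V]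
    (A : V → V → Prop) [DecidableRel A]
    (hAsymm : ∀ i j, A i j → A j i) (hAirrefl : ∀ i, ¬ A i i)
    (L : V → V → ℝ) (hLsymm : ∀ i j, L i j = L j i) (hLpos : ∀ i j, A i j → 0 < L i j)
    (S : V → ℝ) (hSbal : ∑ i, S i = 0)
    (k l : V) (hkl : A k l)
    (C : ℝ → V → V → ℝ) (P : ℝ → V → ℝ) (s₀ : ℝ)
    (hCsymm : ∀ s i j, C s i j = C s j i)
    (hCkl : ∀ s, C s k l = s)
    (hCoff : ∀ s i j, ¬ ((i = k ∧ j = l) ∨ (i = l ∧ j = k)) → C s i j = C s₀ i j)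
    (hCpos : ∀ i j, A i j → 0 < C s₀ i j)
    (hPdiff : ∀ i, DifferentiableAt ℝ (fun s => P s i) s₀)
    (hKirchhoff : ∀ᶠ s in nhds s₀, ∀ i,
      -∑ j ∈ univ.filter (fun j => A i j), C s i j * (P s j - P s i) / L i j = S i)
    (Q : ℝ → V → V → ℝ)
    (hQ : ∀ s i j, Q s i j = C s i j * (P s j - P s i) / L i j) :
    deriv (fun s => (1 / 2) * ∑ i, ∑ j ∈ univ.filter (fun j => A i j),
        Q s i j ^ 2 / C s i j * L i j) s₀
      = -(Q s₀ k l ^ 2 / C s₀ k l ^ 2) * L k l := by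
  classical
  have hlk : A l k := hAsymm k l hkl
  have hne : k ≠ l := fun h => hAirrefl k (h ▸ hkl)
  have hs₀ : 0 < s₀ := by have := hCpos k l hkl; rwa [hCkl] at this
  set p : V → ℝ := fun i => P s₀ i with hp
  set d : V → ℝ := fun i => deriv (fun s => P s i) s₀ with hd
  have hPd : ∀ i, HasDerivAt (fun s => P s i) (d i) s₀ := fun i => (hPdiff i).hasDerivAt
  set c' : V → V → ℝ := fun i j =>
    if (i = k ∧ j = l) ∨ (i = l ∧ j = k) then 1 else 0 with hc'
  -- derivative of the conductivities
  have hCd : ∀ i j, HasDerivAt (fun s => C s i j) (c' i j) s₀ := by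
    intro i j
    by_cases h : (i = k ∧ j = l) ∨ (i = l ∧ j = k)
    · have hcv : c' i j = 1 := if_pos h
      rw [hcv]
      rcases h with ⟨rfl, rfl⟩ | ⟨rfl, rfl⟩
      · simpa only [hCkl] using hasDerivAt_id' s₀
      · have heq : ∀ s, C s i j = s := fun s => (hCsymm s i j).trans (hCkl s)
        simpa only [heq] using hasDerivAt_id' s₀
    · have hcv : c' i j = 0 := if_neg h
      rw [hcv]
      have heq : ∀ s, C s i j = C s₀ i j := fun s => hCoff s i j h
      simpa only [heq] using hasDerivAt_const s₀ (C s₀ i j)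
  -- differentiated Kirchhoff law
  have hK0 : ∀ i, ∑ j ∈ univ.filter (fun j => A i j),
      (c' i j * (p j - p i) + C s₀ i j * (d j - d i)) / L i j = 0 := by
    intro i
    have hKd : HasDerivAt
        (fun s => ∑ j ∈ univ.filter (fun j => A i j), C s i j * (P s j - P s i) / L i j)
        (∑ j ∈ univ.filter (fun j => A i j),
          (c' i j * (p j - p i) + C s₀ i j * (d j - d i)) / L i j) s₀ :=
      HasDerivAt.fun_sum fun j _ => ((hCd i j).mul ((hPd j).sub (hPd i))).div_const (L i j)
    have hconst : (fun s => ∑ j ∈ univ.filter (fun j => A i j),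
        C s i j * (P s j - P s i) / L i j) =ᶠ[nhds s₀] fun _ => -S i := by
      filter_upwards [hKirchhoff] with s hs
      have := hs i
      linarith
    have h1 := hconst.deriv_eq
    rw [deriv_const] at h1
    rw [← hKd.deriv, h1]
  -- eventual equality with the quadratic-form energy
  have hE : (fun s => (1 / 2) * ∑ i, ∑ j ∈ univ.filter (fun j => A i j),
        Q s i j ^ 2 / C s i j * L i j)
      =ᶠ[nhds s₀] (fun s => (1 / 2) * ∑ i, ∑ j ∈ univ.filter (fun j => A i j),
        C s i j * (P s j - P s i) ^ 2 / L i j) := by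
    filter_upwards [eventually_ne_nhds hs₀.ne'] with s hs
    congr 1
    refine Finset.sum_congr rfl fun i _ => Finset.sum_congr rfl fun j hj => ?_
    have hAij : A i j := (Finset.mem_filter.mp hj).2
    have hL : L i j ≠ 0 := (hLpos i j hAij).ne'
    have hC : C s i j ≠ 0 := by
      by_cases h : (i = k ∧ j = l) ∨ (i = l ∧ j = k)
      · rcases h with ⟨rfl, rfl⟩ | ⟨rfl, rfl⟩
        · rw [hCkl]; exact hs
        · rw [hCsymm, hCkl]; exact hs
      · rw [hCoff s i j h]; exact (hCpos i j hAij).ne'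
    rw [hQ]
    field_simp
  rw [hE.deriv_eq]
  -- derivative of the quadratic-form energy
  have hG : HasDerivAt
      (fun s => (1 / 2) * ∑ i, ∑ j ∈ univ.filter (fun j => A i j),
        C s i j * (P s j - P s i) ^ 2 / L i j)
      ((1 / 2) * ∑ i, ∑ j ∈ univ.filter (fun j => A i j),
        (c' i j * (p j - p i) ^ 2 + C s₀ i j * (2 * (p j - p i) * (d j - d i))) / L i j) s₀ := by
    refine HasDerivAt.const_mul _ (HasDerivAt.fun_sum fun i _ => HasDerivAt.fun_sum fun j _ => ?_)
    have h1 := ((hCd i j).mul (((hPd j).sub (hPd i)).pow 2)).div_const (L i j)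
    convert h1 using 2
    push_cast
    · rfl
    · rfl
    · simp only [Pi.sub_apply, Pi.pow_apply, hp, Nat.cast_ofNat]
      ring
  rw [hG.deriv]
  -- split the sum
  have hsplit : ∀ i, ∑ j ∈ univ.filter (fun j => A i j),
      (c' i j * (p j - p i) ^ 2 + C s₀ i j * (2 * (p j - p i) * (d j - d i))) / L i j
      = (∑ j ∈ univ.filter (fun j => A i j), c' i j * (p j - p i) ^ 2 / L i j)
        + ∑ j ∈ univ.filter (fun j => A i j),
            2 * (C s₀ i j / L i j * (p j - p i) * (d j - d i)) := by
    intro i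
    rw [← Finset.sum_add_distrib]
    exact Finset.sum_congr rfl fun j _ => by ring
  simp only [hsplit, Finset.sum_add_distrib, ← Finset.mul_sum]
  -- symmetrization of the cross term
  have hsym := sym_sum_eq A hAsymm (fun i j => C s₀ i j / L i j)
      (fun i j hAij => by show C s₀ i j / L i j = C s₀ j i / L j i; rw [hCsymm, hLsymm]) p d
  -- Kirchhoff ⟹ inner weighted sums of d-differences
  have hinner : ∀ i, ∑ j ∈ univ.filter (fun j => A i j), C s₀ i j / L i j * (d j - d i)
      = -∑ j ∈ univ.filter (fun j => A i j), c' i j * (p j - p i) / L i j := by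
    intro i
    have h := hK0 i
    have h2 : ∑ j ∈ univ.filter (fun j => A i j),
        (c' i j * (p j - p i) + C s₀ i j * (d j - d i)) / L i j
        = (∑ j ∈ univ.filter (fun j => A i j), c' i j * (p j - p i) / L i j)
          + ∑ j ∈ univ.filter (fun j => A i j), C s₀ i j / L i j * (d j - d i) := by
      rw [← Finset.sum_add_distrib]
      exact Finset.sum_congr rfl fun j _ => by ring
    rw [h2] at h
    linarith
  -- evaluate the c'-supported sums
  have hS1 : ∑ i, ∑ j ∈ univ.filter (fun j => A i j), c' i j * (p j - p i) ^ 2 / L i j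
      = (p l - p k) ^ 2 / L k l + (p k - p l) ^ 2 / L l k := by
    have := sum_edge_pair A k l hkl hlk hne (fun i j => (p j - p i) ^ 2 / L i j)
    rw [← this]
    refine Finset.sum_congr rfl fun i _ => Finset.sum_congr rfl fun j _ => ?_
    simp only [hc']
    split <;> simp
  have hS3 : ∑ i, p i * ∑ j ∈ univ.filter (fun j => A i j), c' i j * (p j - p i) / L i j
      = p k * ((p l - p k) / L k l) + p l * ((p k - p l) / L l k) := by
    have := sum_edge_pair A k l hkl hlk hne (fun i j => p i * ((p j - p i) / L i j))
    rw [← this]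
    refine Finset.sum_congr rfl fun i _ => ?_
    rw [Finset.mul_sum]
    refine Finset.sum_congr rfl fun j _ => ?_
    simp only [hc']
    split <;> simp <;> ring
  -- assemble
  have hcross : ∑ i, ∑ j ∈ univ.filter (fun j => A i j),
      C s₀ i j / L i j * (p j - p i) * (d j - d i)
      = 2 * (p k * ((p l - p k) / L k l) + p l * ((p k - p l) / L l k)) := by
    rw [hsym]
    rw [show ∑ i, p i * ∑ j ∈ univ.filter (fun j => A i j), C s₀ i j / L i j * (d j - d i)
        = -∑ i, p i * ∑ j ∈ univ.filter (fun j => A i j), c' i j * (p j - p i) / L i j by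
      rw [← Finset.sum_neg_distrib]
      exact Finset.sum_congr rfl fun i _ => by rw [hinner i]; ring]
    rw [hS3]
    ring
  rw [hS1, hcross]
  -- final computation
  have hLne : L k l ≠ 0 := (hLpos k l hkl).ne'
  have hLlk : L l k = L k l := hLsymm l k
  rw [hQ, hCkl, hLlk]
  field_simp
  ring
end

section
/- Suppose m : Ω → ℝ^d satisfies (∇p ⊗ ∇p)m = ν|m|^{2(γ−1)}m pointwise on a measurable set A where m ≠ 0, with γ > 1, ν > 0. Then there exist disjoint measurable sets A⁺, A⁻ with A⁺ ∪ A⁻ = A such that ∇p = (χ_{A⁺} − χ_{A⁻}) √ν |m|^{γ−2} m on A. -/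
/-!
Write `g = ∇p x`, `v = m x` and `t = ⟪g, v⟫`. The equation `t g = c v` with `c > 0` and `v ≠ 0`
forces `t ≠ 0`, so `g = (c / t) v` is parallel to `v`; pairing with `v` gives `t² = c ‖v‖²`,
hence `c / t = sign t · √c / ‖v‖`. For `c = ν ‖v‖^(2(γ-1))` this is `sign t · √ν ‖v‖^(γ-2)`,
and `A⁺ = A ∩ {t > 0}`, `A⁻ = A ∩ {t ≤ 0}` are measurable because `t` is.
-/

open scoped RealInnerProductSpace

section InnerProductSpace

variable {E : Type*} [NormedAddCommGroup E] [InnerProductSpace ℝ E] {g v : E} {c : ℝ}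

theorem inner_ne_zero_of_inner_smul_eq_smul (hc : c ≠ 0) (hv : v ≠ 0)
    (h : ⟪g, v⟫ • g = c • v) : ⟪g, v⟫ ≠ 0 := by
  intro ht
  rw [ht, zero_smul, eq_comm, smul_eq_zero] at h
  tauto

theorem eq_div_inner_smul_of_inner_smul_eq_smul (ht : ⟪g, v⟫ ≠ 0)
    (h : ⟪g, v⟫ • g = c • v) : g = (c / ⟪g, v⟫) • v := by
  rw [div_eq_inv_mul, ← smul_smul, ← h, smul_smul, inv_mul_cancel₀ ht, one_smul]

theorem abs_inner_eq_of_inner_smul_eq_smul (hc : 0 ≤ c) (ht : ⟪g, v⟫ ≠ 0)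
    (h : ⟪g, v⟫ • g = c • v) : |⟪g, v⟫| = √c * ‖v‖ := by
  have hpair := congrArg (⟪·, v⟫) (eq_div_inner_smul_of_inner_smul_eq_smul ht h)
  simp only [real_inner_smul_left, real_inner_self_eq_norm_sq] at hpair
  have hsq : ⟪g, v⟫ ^ 2 = c * ‖v‖ ^ 2 := by
    field_simp at hpair
    linear_combination hpair
  rw [← Real.sqrt_sq_eq_abs, hsq, Real.sqrt_mul hc, Real.sqrt_sq (norm_nonneg v)]

theorem eq_sign_smul_of_inner_smul_eq_smul (hc : 0 < c) (hv : v ≠ 0)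
    (h : ⟪g, v⟫ • g = c • v) : g = (Real.sign ⟪g, v⟫ * (√c / ‖v‖)) • v := by
  have ht := inner_ne_zero_of_inner_smul_eq_smul hc.ne' hv h
  have habs := abs_inner_eq_of_inner_smul_eq_smul hc.le ht h
  have hdiv : c / ⟪g, v⟫ = Real.sign ⟪g, v⟫ * (c / |⟪g, v⟫|) := by
    rcases ht.lt_or_gt with hneg | hpos
    · rw [Real.sign_of_neg hneg, abs_of_neg hneg, div_neg, neg_one_mul, neg_neg]
    · rw [Real.sign_of_pos hpos, abs_of_pos hpos, one_mul]
  have hv' : ‖v‖ ≠ 0 := norm_ne_zero_iff.mpr hv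
  have hc' : √c ≠ 0 := (Real.sqrt_pos.mpr hc).ne'
  conv_lhs => rw [eq_div_inner_smul_of_inner_smul_eq_smul ht h, hdiv, habs]
  congr 2
  field_simp
  exact (Real.sq_sqrt hc.le).symm

end InnerProductSpace

theorem Real.sqrt_mul_rpow_div_self {ν r γ : ℝ} (hν : 0 ≤ ν) (hr : 0 < r) :
    √(ν * r ^ (2 * (γ - 1))) / r = √ν * r ^ (γ - 2) := by
  rw [Real.sqrt_mul hν, Real.sqrt_eq_rpow (r ^ _), ← Real.rpow_mul hr.le, mul_div_assoc,
    show γ - 2 = 2 * (γ - 1) * (1 / 2) - 1 by ring, Real.rpow_sub_one hr.ne']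

theorem Set.indicator_inter_pos_sub_indicator_diff_pos {α : Type*} {A : Set α} {f : α → ℝ}
    {x : α} (hx : x ∈ A) (hfx : f x ≠ 0) :
    (A ∩ {y | 0 < f y}).indicator (fun _ => (1 : ℝ)) x
      - (A \ {y | 0 < f y}).indicator (fun _ => (1 : ℝ)) x = Real.sign (f x) := by
  rcases hfx.lt_or_gt with hneg | hpos
  · have hmem : x ∈ A \ {y | 0 < f y} := ⟨hx, hneg.not_gt⟩
    rw [Set.indicator_of_notMem (fun h => hneg.not_gt h.2), Set.indicator_of_mem hmem,
      Real.sign_of_neg hneg, zero_sub]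
  · have hmem : x ∈ A ∩ {y | 0 < f y} := ⟨hx, hpos⟩
    rw [Set.indicator_of_mem hmem, Set.indicator_of_notMem (fun h => h.2 hpos),
      Real.sign_of_pos hpos, sub_zero]

theorem decomposition_sign_sets_vector_general
    (d : ℕ) (A : Set (EuclideanSpace ℝ (Fin d)))
    (hA : MeasurableSet A)
    (ν γ : ℝ) (hν : 0 < ν)
    (p : EuclideanSpace ℝ (Fin d) → ℝ)
    (hpgradmeas : Measurable (fun x => gradient p x))
    (m : EuclideanSpace ℝ (Fin d) → EuclideanSpace ℝ (Fin d))
    (hmmeas : Measurable m)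
    (hm0 : ∀ x ∈ A, m x ≠ 0)
    (hEL : ∀ x ∈ A,
      ⟪gradient p x, m x⟫ • gradient p x = (ν * ‖m x‖ ^ (2 * (γ - 1))) • m x) :
    ∃ Ap Am : Set (EuclideanSpace ℝ (Fin d)),
      MeasurableSet Ap ∧ MeasurableSet Am ∧ Disjoint Ap Am ∧ Ap ∪ Am = A ∧
      ∀ x ∈ A, gradient p x
        = ((Set.indicator Ap (fun _ => (1 : ℝ)) x
            - Set.indicator Am (fun _ => (1 : ℝ)) x)
          * (Real.sqrt ν * ‖m x‖ ^ (γ - 2))) • m x := by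
  set f := fun x => ⟪gradient p x, m x⟫
  have hpos : MeasurableSet {x | 0 < f x} :=
    measurableSet_lt measurable_const (hpgradmeas.inner hmmeas)
  refine ⟨A ∩ {x | 0 < f x}, A \ {x | 0 < f x}, hA.inter hpos, hA.diff hpos,
    Set.disjoint_sdiff_inter.symm, Set.inter_union_sdiff A _, fun x hx => ?_⟩
  have hnorm : 0 < ‖m x‖ := norm_pos_iff.mpr (hm0 x hx)
  have hc : 0 < ν * ‖m x‖ ^ (2 * (γ - 1)) := mul_pos hν (Real.rpow_pos_of_pos hnorm _)
  have hf : f x ≠ 0 := inner_ne_zero_of_inner_smul_eq_smul hc.ne' (hm0 x hx) (hEL x hx)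
  calc gradient p x
      = (Real.sign (f x) * (√(ν * ‖m x‖ ^ (2 * (γ - 1))) / ‖m x‖)) • m x :=
        eq_sign_smul_of_inner_smul_eq_smul hc (hm0 x hx) (hEL x hx)
    _ = _ := by
      rw [Set.indicator_inter_pos_sub_indicator_diff_pos hx hf,
        Real.sqrt_mul_rpow_div_self hν.le hnorm]

/-- If `(∇p ⊗ ∇p) m = ν |m|^(2(γ−1)) m` holds pointwise on a measurable set `A` where
`m ≠ 0` (with `γ > 1`, `ν > 0`), then there exist disjoint measurable sets `A⁺, A⁻` with
`A⁺ ∪ A⁻ = A` such that `∇p = (χ_{A⁺} − χ_{A⁻}) √ν |m|^(γ−2) m` on `A`. -/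
theorem decomposition_sign_sets_vector
    (d : ℕ) (Ω A : Set (EuclideanSpace ℝ (Fin d)))
    (hA : MeasurableSet A) (hAΩ : A ⊆ Ω)
    (ν γ : ℝ) (hν : 0 < ν) (hγ : 1 < γ)
    (p : EuclideanSpace ℝ (Fin d) → ℝ)
    (hp : ∀ x ∈ Ω, DifferentiableAt ℝ p x)
    (hpgradmeas : Measurable (fun x => gradient p x))
    (m : EuclideanSpace ℝ (Fin d) → EuclideanSpace ℝ (Fin d))
    (hmmeas : Measurable m)
    (hm0 : ∀ x ∈ A, m x ≠ 0)
    (hEL : ∀ x ∈ A,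
      ⟪gradient p x, m x⟫ • gradient p x = (ν * ‖m x‖ ^ (2 * (γ - 1))) • m x) :
    ∃ Ap Am : Set (EuclideanSpace ℝ (Fin d)),
      MeasurableSet Ap ∧ MeasurableSet Am ∧ Disjoint Ap Am ∧ Ap ∪ Am = A ∧
      ∀ x ∈ A, gradient p x
        = ((Set.indicator Ap (fun _ => (1 : ℝ)) x
            - Set.indicator Am (fun _ => (1 : ℝ)) x)
          * (Real.sqrt ν * ‖m x‖ ^ (γ - 2))) • m x :=
  decomposition_sign_sets_vector_general d A hA ν γ hν p hpgradmeas m hmmeas hm0 hEL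
end
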